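/- arXiv:0708.2895 — 4 statements merged into one kernel-verified Lean document; each statement's English description precedes it below -/
import Mathlib

section
/- Let α be a complex random variable with E|α|² < ∞ and Var(α) > 0. Then there exist a real number θ and a real number κ ≥ 1 such that the random variable e^{√−1·θ}·α has κ-controlled second moment. -/
open MeasureTheory ProbabilityTheory Filter

noncomputable section

/-- The operator (spectral) norm of an `n × n` complex matrix, i.e. the supremum of `‖M v‖`
over unit vectors `v` in Euclidean space. -/
def opNorm {n : ℕ} (M : Matrix (Fin n) (Fin n) ℂ) : ℝ :=
  ‖(Matrix.toEuclideanCLM (𝕜 := ℂ) M : EuclideanSpace ℂ (Fin n) →L[ℂ] EuclideanSpace ℂ (Fin n))‖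

/-- The least singular value of an `n × n` complex matrix: `σ_n(M) = inf_{‖v‖ = 1} ‖M v‖`. -/
def sigmaMin {n : ℕ} (M : Matrix (Fin n) (Fin n) ℂ) : ℝ :=
  ⨅ v : {v : EuclideanSpace ℂ (Fin n) // ‖v‖ = 1},
    ‖Matrix.toEuclideanCLM (𝕜 := ℂ) M v.1‖

open Classical in
/-- The empirical spectral distribution of an `n × n` complex matrix:
`ESD M s t = (1/n) * #{eigenvalues λ (with multiplicity) : Re λ ≤ s, Im λ ≤ t}`,
eigenvalues with multiplicity being the roots of the characteristic polynomial. -/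
def ESD {n : ℕ} (M : Matrix (Fin n) (Fin n) ℂ) (s t : ℝ) : ℝ :=
  ((M.charpoly.roots.filter (fun z => z.re ≤ s ∧ z.im ≤ t)).card : ℝ) / n

/-- The distribution function of the uniform probability measure on the unit disk:
`μ_∞(s,t) = (1/π) · mes {z : |z| ≤ 1, Re z ≤ s, Im z ≤ t}`. -/
def unifDiskCDF (s t : ℝ) : ℝ :=
  (volume {z : ℂ | ‖z‖ ≤ 1 ∧ z.re ≤ s ∧ z.im ≤ t}).toReal / Real.pi

/-- The law (on `ℂ`) of a Bernoulli random variable which equals `1` with probability `ρ`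
and `0` with probability `1 - ρ`. -/
def bernoulliLawC (ρ : ℝ) : Measure ℂ :=
  ENNReal.ofReal ρ • Measure.dirac 1 + ENNReal.ofReal (1 - ρ) • Measure.dirac 0

/-- The law of `α · I_μ`, the product of a random variable with law `ν` and an independent
Bernoulli variable equal to `1` with probability `μ` and `0` otherwise. -/
def bernoulliMix (ν : Measure ℂ) (μ : ℝ) : Measure ℂ :=
  ENNReal.ofReal μ • ν + ENNReal.ofReal (1 - μ) • Measure.dirac 0

/-- The law of `α^{(μ)} := (α₁ - α₂) · I_{μ/2}` where `α₁, α₂` are i.i.d. with law `ν` and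
`I_{μ/2}` is an independent Bernoulli variable equal to `1` with probability `μ/2`. -/
def diffLaw (ν : Measure ℂ) (μ : ℝ) : Measure ℂ :=
  ENNReal.ofReal (μ / 2) • Measure.map (fun p : ℂ × ℂ => p.1 - p.2) (ν.prod ν)
    + ENNReal.ofReal (1 - μ / 2) • Measure.dirac 0

/-- The concentration probability `P_μ(v) := E exp(-π |W_{α^{(μ)}}(v)|²)`, where
`W_{α^{(μ)}}(v) = ∑ i, v i · x i` with `x i` i.i.d. copies of `α^{(μ)}` and `ν` is the law
of `α`. -/
def concProb {ι : Type*} [Fintype ι] (ν : Measure ℂ) (μ : ℝ) (v : ι → ℂ) : ℝ :=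
  ∫ x, Real.exp (-Real.pi * ‖∑ i, v i * x i‖ ^ 2) ∂(Measure.pi fun _ : ι => diffLaw ν μ)

/-- The small ball probability `p_{r,α}(v) := sup_z P(W_α(v) ∈ B(z,r))`, where
`W_α(v) = ∑ i, v i · x i` with `x i` i.i.d. copies of a random variable with law `ν`. -/
def smallBall {ι : Type*} [Fintype ι] (ν : Measure ℂ) (v : ι → ℂ) (r : ℝ) : ℝ :=
  ⨆ z : ℂ, ((Measure.pi fun _ : ι => ν) {x | dist (∑ i, v i * x i) z ≤ r}).toReal

/-- The characteristic function `f(z) := |E e(Re(α z))|²` where `e(t) = e^{2π√-1 t}` and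
`ν` is the law of `α`. -/
def charFn (ν : Measure ℂ) (z : ℂ) : ℝ :=
  ‖∫ w, Complex.exp (2 * Real.pi * Complex.I * ((w * z).re : ℂ)) ∂ν‖ ^ 2

/-- The `α`-norm `‖w‖_α := (E ‖Re(w (α₁ - α₂))‖_{ℝ/ℤ}²)^{1/2}` where `α₁, α₂` are i.i.d.
with law `ν`, and `‖t‖_{ℝ/ℤ} = |t - round t|` is the distance to the nearest integer. -/
def alphaNorm (ν : Measure ℂ) (w : ℂ) : ℝ :=
  Real.sqrt (∫ p : ℂ × ℂ,
    |(w * (p.1 - p.2)).re - (round ((w * (p.1 - p.2)).re) : ℝ)| ^ 2 ∂(ν.prod ν))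

/-- The symmetric generalized arithmetic progression with generators `v i` and dimensions
`L i`: the set of `∑ i, m i • v i` with `m i ∈ ℤ`, `|m i| ≤ L i`. -/
def GAPset {r : ℕ} (v : Fin r → ℂ) (L : Fin r → ℝ) : Set ℂ :=
  {z | ∃ m : Fin r → ℤ, (∀ i, |(m i : ℝ)| ≤ L i) ∧ z = ∑ i, (m i : ℂ) * v i}

/-- The dispersion `D(Q) := #Q / #(Q ∩ B(0,1))` of a finite set `Q ⊆ ℂ`. -/
def dispersion (Q : Set ℂ) : ℝ :=
  (Q.ncard : ℝ) / ((Q ∩ Metric.closedBall 0 1).ncard : ℝ)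

/-- A complex random variable `α` has `κ`-controlled second moment if `κ ≥ 1`,
`E|α|² ≤ κ`, and `E[(Re(zα - w))² 1_{|α| ≤ κ}] ≥ Re(z)²/κ` for all `z w : ℂ`. -/
def HasControlledSecondMoment {Ω : Type*} [MeasureSpace Ω] (α : Ω → ℂ) (κ : ℝ) : Prop :=
  1 ≤ κ ∧ Integrable (fun ω => ‖α ω‖ ^ 2) ∧ (∫ ω, ‖α ω‖ ^ 2) ≤ κ ∧
    ∀ z w : ℂ, z.re ^ 2 / κ ≤ ∫ ω in {ω | ‖α ω‖ ≤ κ}, ((z * α ω - w).re) ^ 2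

end

/-!
Let `S` be the support of the law of `α`; positive variance gives two distinct points `p, q ∈ S`.
It suffices to find finitely many points of `S` such that every line `Re (z ζ - w) = 0` with
`Re z ≠ 0` keeps horizontal distance `ρ` from a small ball around one of them: these balls have
positive probability, and on such a ball `Re (z α - w) ^ 2 ≥ (Re z) ^ 2 ρ ^ 2`.
If some point of `S` lies off the line through `p` and `q`, three non-collinear support points
work, since a line close to all three of them would make their cross product small. Otherwise `S`
lies on that line; after a rotation making it horizontal, a non-horizontal line crosses it only
once and so stays away from `p` or from `q`.
-/

open Complex ComplexConjugate

lemma exists_exp_mul_I_eq_conj_div_norm {u : ℂ} (hu : u ≠ 0) :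
    ∃ θ : ℝ, exp (θ * I) = conj u / ‖u‖ :=
  (norm_eq_one_iff _).1 <| by
    rw [norm_div, norm_conj, norm_real, norm_norm, div_self (norm_ne_zero_iff.2 hu)]

lemma re_mul_cross_eq_sum_re_mul_sub (z w : ℂ) (P : Fin 3 → ℂ) :
    z.re * (conj (P 1 - P 0) * (P 2 - P 0)).im =
      (z * P 0 - w).re * ((P 1).im - (P 2).im) + (z * P 1 - w).re * ((P 2).im - (P 0).im)
        + (z * P 2 - w).re * ((P 0).im - (P 1).im) := by
  simp only [mul_im, mul_re, sub_re, sub_im, conj_re, conj_im]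
  ring

lemma exists_separating_balls_of_cross_ne_zero {P : Fin 3 → ℂ}
    (hP : (conj (P 1 - P 0) * (P 2 - P 0)).im ≠ 0) :
    ∃ r ρ : ℝ, 0 < r ∧ 0 < ρ ∧ ∀ z w : ℂ, ∃ i, ∀ ζ, dist ζ (P i) < r →
      |z.re| * ρ ≤ |(z * ζ - w).re| := by
  set F : (Fin 3 → ℂ) → ℝ := fun Q => (conj (Q 1 - Q 0) * (Q 2 - Q 0)).im
  set G : (Fin 3 → ℂ) → ℝ := fun Q =>
    |(Q 1).im - (Q 2).im| + |(Q 2).im - (Q 0).im| + |(Q 0).im - (Q 1).im|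
  set ρ := |F P| / (G P + 1)
  have hρ : 0 < ρ := by positivity
  have hP_mem : ρ * G P < |F P| := by
    rw [div_mul_eq_mul_div, div_lt_iff₀ (by positivity)]
    nlinarith [abs_pos.2 hP]
  obtain ⟨r, hr, hball⟩ := Metric.isOpen_iff.1
    (isOpen_lt (by fun_prop) (by fun_prop) : IsOpen {Q | ρ * G Q < |F Q|}) P hP_mem
  refine ⟨r, ρ, hr, hρ, fun z w => ?_⟩
  by_contra! hnear
  choose ζ hζ hclose using hnear
  have hζ_mem : ρ * G ζ < |F ζ| := hball ((dist_pi_lt_iff hr).2 hζ)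
  have hz : 0 < |z.re| := pos_of_mul_pos_left ((abs_nonneg _).trans_lt (hclose 0)) hρ.le
  have hsmall : |z.re| * |F ζ| ≤ |z.re| * (ρ * G ζ) := by
    rw [← abs_mul, re_mul_cross_eq_sum_re_mul_sub z w ζ]
    refine (abs_add_three _ _ _).trans ?_
    simp only [abs_mul, G]
    have := hclose 0; have := hclose 1; have := hclose 2
    nlinarith [abs_nonneg ((ζ 1).im - (ζ 2).im), abs_nonneg ((ζ 2).im - (ζ 0).im),
      abs_nonneg ((ζ 0).im - (ζ 1).im)]
  exact (mul_le_mul_iff_right₀ hz).1 hsmall |>.not_gt hζ_mem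

lemma exists_separating_ball_of_im_eq {p q : ℂ} (him : p.im = q.im) (z w : ℂ) :
    ∃ i : Fin 2, ∀ ζ : ℂ, ζ.im = p.im → dist ζ (![p, q] i) < dist p q / 4 →
      |z.re| * (dist p q / 4) ≤ |(z * ζ - w).re| := by
  set s := z.im * p.im + w.re
  have hline : ∀ ζ : ℂ, ζ.im = p.im → (z * ζ - w).re = z.re * ζ.re - s := fun ζ hζ => by
    simp only [sub_re, mul_re, hζ, s]; ring
  have hpq : dist p q = |p.re - q.re| := by rw [dist_of_im_eq him, Real.dist_eq]
  have hfar : ∀ x : ℂ, x.im = p.im → |z.re| * (dist p q / 2) ≤ |z.re * x.re - s| →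
      ∀ ζ : ℂ, ζ.im = p.im → dist ζ x < dist p q / 4 →
        |z.re| * (dist p q / 4) ≤ |(z * ζ - w).re| := by
    intro x hx hxs ζ hζ hζx
    have hre : |ζ.re - x.re| < dist p q / 4 := by rwa [dist_of_im_eq (hζ.trans hx.symm)] at hζx
    have hshift : z.re * x.re - s = (z.re * ζ.re - s) - z.re * (ζ.re - x.re) := by ring
    rw [hline ζ hζ]
    have := abs_sub (z.re * ζ.re - s) (z.re * (ζ.re - x.re))
    rw [← hshift, abs_mul] at this
    nlinarith [abs_nonneg z.re]
  have hsum : |z.re| * dist p q ≤ |z.re * p.re - s| + |z.re * q.re - s| := by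
    rw [hpq, ← abs_mul]
    exact (congrArg abs (by ring)).trans_le (abs_sub _ _)
  rcases le_or_gt (|z.re| * (dist p q / 2)) |z.re * p.re - s| with hp | hp
  · exact ⟨0, hfar p rfl hp⟩
  · exact ⟨1, hfar q him.symm (by linarith)⟩

section Measure

variable {Ω E : Type*} [MeasurableSpace Ω] {μ : Measure Ω}

lemma ae_mem_support_map [TopologicalSpace E] [MeasurableSpace E] [HereditarilyLindelofSpace E]
    {α : Ω → E} (hα : AEMeasurable α μ) : ∀ᵐ ω ∂μ, α ω ∈ (μ.map α).support :=
  ae_of_ae_map hα Measure.support_mem_ae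

lemma measure_dist_lt_pos_of_mem_support [PseudoMetricSpace E] [MeasurableSpace E]
    [OpensMeasurableSpace E] {α : Ω → E} (hα : Measurable α) {p : E}
    (hp : p ∈ (μ.map α).support) {r : ℝ} (hr : 0 < r) : 0 < μ {ω | dist (α ω) p < r} := by
  have hball := (Measure.mem_support_iff_forall p).1 hp _ (Metric.ball_mem_nhds p hr)
  rwa [Measure.map_apply hα measurableSet_ball] at hball

lemma exists_ne_mem_support_of_variance_pos [NormedAddCommGroup E] [NormedSpace ℝ E]
    [CompleteSpace E] [MeasurableSpace E] [HereditarilyLindelofSpace E] [IsProbabilityMeasure μ]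
    {α : Ω → E} (hα : AEMeasurable α μ) (hvar : 0 < ∫ ω, ‖α ω - ∫ ω', α ω' ∂μ‖ ^ 2 ∂μ) :
    ∃ p ∈ (μ.map α).support, ∃ q ∈ (μ.map α).support, p ≠ q := by
  have := Measure.isProbabilityMeasure_map (μ := μ) hα
  obtain ⟨p, hp⟩ := Measure.nonempty_support (IsProbabilityMeasure.ne_zero (μ.map α))
  by_contra! hsingle
  have hconst : ∀ᵐ ω ∂μ, α ω = p :=
    (ae_mem_support_map hα).mono fun ω hω => hsingle _ hω _ hp
  have hmean : ∫ ω, α ω ∂μ = p := by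
    rw [integral_congr_ae hconst, integral_const, probReal_univ, one_smul]
  rw [hmean, integral_eq_zero_of_ae (hconst.mono fun ω hω => by simp [hω])] at hvar
  exact lt_irrefl _ hvar

lemma integrable_re_mul_sub_sq [IsFiniteMeasure μ] {β : Ω → ℂ} (hβ : MemLp β 2 μ) (z w : ℂ) :
    Integrable (fun ω => (z * β ω - w).re ^ 2) μ :=
  ((hβ.const_mul z).sub (memLp_const w)).re.integrable_sq

lemma mul_measureReal_le_setIntegral [IsFiniteMeasure μ] {f : Ω → ℝ} {A B : Set Ω} {c : ℝ}
    (hA : MeasurableSet A) (hAB : A ⊆ B) (hf : IntegrableOn f B μ) (hf0 : ∀ ω, 0 ≤ f ω)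
    (hc : ∀ᵐ ω ∂μ, ω ∈ A → c ≤ f ω) :
    c * μ.real A ≤ ∫ ω in B, f ω ∂μ :=
  calc c * μ.real A = ∫ _ in A, c ∂μ := by rw [setIntegral_const, smul_eq_mul, mul_comm]
    _ ≤ ∫ ω in A, f ω ∂μ :=
      setIntegral_mono_ae_restrict (integrableOn_const (measure_ne_top _ _)) (hf.mono_set hAB)
        ((ae_restrict_iff' hA).2 hc)
    _ ≤ ∫ ω in B, f ω ∂μ := setIntegral_mono_set hf (ae_of_all _ hf0) hAB.eventuallyLE

end Measure

section ControlledSecondMoment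

variable {Ω : Type*} [MeasureSpace Ω] [IsProbabilityMeasure (ℙ : Measure Ω)]

theorem exists_hasControlledSecondMoment_of_separating_balls {β : Ω → ℂ} (hβ : Measurable β)
    (hβ2 : Integrable fun ω => ‖β ω‖ ^ 2) {ι : Type*} [Finite ι] {P : ι → ℂ} {r ρ : ℝ}
    (hρ : 0 < ρ) (hpos : ∀ i, 0 < ℙ {ω | dist (β ω) (P i) < r})
    (hsep : ∀ z w : ℂ, ∃ i, ∀ᵐ ω, dist (β ω) (P i) < r → |z.re| * ρ ≤ |(z * β ω - w).re|) :
    ∃ κ, HasControlledSecondMoment β κ := by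
  have : Nonempty ι := ⟨(hsep 0 0).choose⟩
  obtain ⟨i₀, hi₀⟩ := Finite.exists_min fun i => (ℙ : Measure Ω).real {ω | dist (β ω) (P i) < r}
  obtain ⟨j₀, hj₀⟩ := Finite.exists_max fun i => ‖P i‖
  set m := (ℙ : Measure Ω).real {ω | dist (β ω) (P i₀) < r}
  have hm : 0 < m := ENNReal.toReal_pos (hpos i₀).ne' (measure_ne_top _ _)
  set κ := max (max 1 (‖P j₀‖ + r)) (max (∫ ω, ‖β ω‖ ^ 2) (1 / (ρ ^ 2 * m)))
  have hκ : 1 / κ ≤ ρ ^ 2 * m :=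
    (one_div_le (by positivity) (by positivity)).1 (le_max_of_le_right (le_max_right _ _))
  refine ⟨κ, le_max_of_le_left (le_max_left _ _), hβ2, le_max_of_le_right (le_max_left _ _),
    fun z w => ?_⟩
  obtain ⟨i, hi⟩ := hsep z w
  have hball : {ω | dist (β ω) (P i) < r} ⊆ {ω | ‖β ω‖ ≤ κ} :=
    fun ω (hω : dist (β ω) (P i) < r) => show ‖β ω‖ ≤ κ from
      le_max_of_le_left <| le_max_of_le_right <| by
        linarith [norm_le_norm_add_norm_sub' (β ω) (P i), hj₀ i, dist_eq_norm (β ω) (P i)]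
  calc z.re ^ 2 / κ ≤ z.re ^ 2 * (ρ ^ 2 * m) := by
        rw [div_eq_mul_one_div]; gcongr
    _ ≤ (|z.re| * ρ) ^ 2 * (ℙ : Measure Ω).real {ω | dist (β ω) (P i) < r} := by
        rw [mul_pow, sq_abs, mul_assoc]; gcongr; exact hi₀ i
    _ ≤ ∫ ω in {ω | ‖β ω‖ ≤ κ}, (z * β ω - w).re ^ 2 :=
        mul_measureReal_le_setIntegral (measurableSet_lt (by fun_prop) measurable_const) hball
          (integrable_re_mul_sub_sq ((memLp_two_iff_integrable_sq_norm
            hβ.aestronglyMeasurable).2 hβ2) z w).integrableOn (fun _ => sq_nonneg _)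
          (hi.mono fun ω h hω => (pow_le_pow_left₀ (by positivity) (h hω) 2).trans_eq (sq_abs _))

theorem exists_hasControlledSecondMoment_of_cross_ne_zero {α : Ω → ℂ} (hα : Measurable α)
    (hα2 : Integrable fun ω => ‖α ω‖ ^ 2) {P : Fin 3 → ℂ}
    (hP : ∀ i, P i ∈ (Measure.map α ℙ).support)
    (hcross : (conj (P 1 - P 0) * (P 2 - P 0)).im ≠ 0) :
    ∃ κ, HasControlledSecondMoment α κ := by
  obtain ⟨r, ρ, hr, hρ, hsep⟩ := exists_separating_balls_of_cross_ne_zero hcross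
  exact exists_hasControlledSecondMoment_of_separating_balls hα hα2 hρ
    (fun i => measure_dist_lt_pos_of_mem_support hα (hP i) hr)
    fun z w => (hsep z w).imp fun _ hi => ae_of_all _ fun _ => hi _

theorem exists_rotation_hasControlledSecondMoment_of_collinear {α : Ω → ℂ} (hα : Measurable α)
    (hα2 : Integrable fun ω => ‖α ω‖ ^ 2) {p q : ℂ} (hp : p ∈ (Measure.map α ℙ).support)
    (hq : q ∈ (Measure.map α ℙ).support) (hpq : p ≠ q)
    (hline : ∀ s ∈ (Measure.map α ℙ).support, (conj (q - p) * (s - p)).im = 0) :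
    ∃ θ κ : ℝ, HasControlledSecondMoment (fun ω => exp (θ * I) * α ω) κ := by
  obtain ⟨θ, hθ⟩ := exists_exp_mul_I_eq_conj_div_norm (sub_ne_zero.2 hpq.symm)
  refine ⟨θ, ?_⟩
  set e := exp (θ * I)
  have he : ‖e‖ = 1 := norm_exp_ofReal_mul_I θ
  have hdist : ∀ ζ ξ, dist (e * ζ) (e * ξ) = dist ζ ξ := fun ζ ξ => by
    rw [dist_eq_norm, dist_eq_norm, ← mul_sub, norm_mul, he, one_mul]
  have him : ∀ s ∈ (Measure.map α ℙ).support, (e * s).im = (e * p).im := fun s hs => by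
    have : (e * (s - p)).im = 0 := by
      rw [hθ, div_mul_eq_mul_div, div_ofReal_im, hline s hs, zero_div]
    rwa [mul_sub, sub_im, sub_eq_zero] at this
  have hβ2 : Integrable fun ω => ‖e * α ω‖ ^ 2 := by simpa [norm_mul, he] using hα2
  have hr : 0 < dist p q / 4 := by have := dist_pos.2 hpq; positivity
  refine exists_hasControlledSecondMoment_of_separating_balls (hα.const_mul e) hβ2
    (P := ![e * p, e * q]) (r := dist p q / 4) (ρ := dist p q / 4) hr (fun i => ?_) fun z w => ?_
  · fin_cases i <;> simpa [hdist] using measure_dist_lt_pos_of_mem_support hα ‹_› hr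
  · obtain ⟨i, hi⟩ := exists_separating_ball_of_im_eq (him q hq).symm z w
    rw [hdist] at hi
    exact ⟨i, (ae_mem_support_map hα.aemeasurable).mono fun ω hω => hi _ (him _ hω)⟩

end ControlledSecondMoment

theorem controlled_second_moment_after_rotation_general
    {Ω : Type*} [MeasureSpace Ω] [IsProbabilityMeasure (ℙ : Measure Ω)]
    (α : Ω → ℂ) (hmeas : Measurable α)
    (hvarint : Integrable (fun ω => ‖α ω‖ ^ 2))
    (hvar : 0 < ∫ ω, ‖α ω - ∫ ω', α ω'‖ ^ 2) :
    ∃ θ κ : ℝ, 1 ≤ κ ∧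
      HasControlledSecondMoment (fun ω => Complex.exp ((θ : ℂ) * Complex.I) * α ω) κ := by
  obtain ⟨p, hp, q, hq, hpq⟩ := exists_ne_mem_support_of_variance_pos hmeas.aemeasurable hvar
  by_cases hline : ∀ s ∈ (Measure.map α ℙ).support, (conj (q - p) * (s - p)).im = 0
  · obtain ⟨θ, κ, h⟩ :=
      exists_rotation_hasControlledSecondMoment_of_collinear hmeas hvarint hp hq hpq hline
    exact ⟨θ, κ, h.1, h⟩
  · obtain ⟨s, hs, hcross⟩ := not_forall₂.1 hline
    obtain ⟨κ, h⟩ := exists_hasControlledSecondMoment_of_cross_ne_zero hmeas hvarint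
      (P := ![p, q, s]) (fun i => by fin_cases i <;> assumption) hcross
    exact ⟨0, κ, h.1, by simpa using h⟩

/-- Any complex random variable with finite non-zero variance has `κ`-controlled second
moment after a phase rotation. -/
theorem controlled_second_moment_after_rotation
    {Ω : Type*} [MeasureSpace Ω] [IsProbabilityMeasure (ℙ : Measure Ω)]
    (α : Ω → ℂ) (hmeas : Measurable α) (hint : Integrable α)
    (hvarint : Integrable (fun ω => ‖α ω‖ ^ 2))
    (hvar : 0 < ∫ ω, ‖α ω - ∫ ω', α ω'‖ ^ 2) :
    ∃ θ κ : ℝ, 1 ≤ κ ∧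
      HasControlledSecondMoment (fun ω => Complex.exp ((θ : ℂ) * Complex.I) * α ω) κ :=
  controlled_second_moment_after_rotation_general α hmeas hvarint hvar
end

section
/- Let α be a complex random variable, let 0 < μ ≤ 1, and let v = (v₁,…,vₙ) be a tuple of complex numbers. Then P_μ(v) = ∫_ℂ ∏_{i=1}^{n} (1 − μ/2 + (μ/2)·f(ξv_i)) · exp(−π|ξ|²) dξ, where dξ is Lebesgue measure on ℂ. -/
open MeasureTheory ProbabilityTheory Filter

/-!
The Gaussian is its own Fourier transform: `exp(-π|w|²) = ∫ e(Re(ξ w)) exp(-π|ξ|²) dξ`.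
Substituting `w = W(v)` and applying Fubini turns `P_μ(v)` into
`∫ E e(Re(ξ W(v))) exp(-π|ξ|²) dξ`, and by independence `E e(Re(ξ W(v)))` is the product over
`i` of the characteristic function of `α^{(μ)}` at `ξ vᵢ`. Since `e(Re((α₁ - α₂) z))` is
`e(Re(α₁ z))` times the conjugate of `e(Re(α₂ z))`, that characteristic function is
`1 - μ/2 + (μ/2) f(ξ vᵢ)`.
-/

open Complex
open scoped Real FourierTransform ComplexConjugate

lemma charFn_eq_norm_integral_fourierChar (ν : Measure ℂ) (z : ℂ) :
    charFn ν z = ‖∫ w, (𝐞 (w * z).re : ℂ) ∂ν‖ ^ 2 := by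
  simp only [charFn, Real.fourierChar_apply]
  congr 4 with w
  push_cast
  ring_nf

lemma integral_fourierChar_mul_gaussian (z : ℂ) :
    ∫ ξ : ℂ, 𝐞 (ξ * z).re * cexp (-π * ‖ξ‖ ^ 2) = cexp (-π * ‖z‖ ^ 2) := by
  have hπ : (π : ℂ) ≠ 0 := ofReal_ne_zero.mpr Real.pi_ne_zero
  have h := GaussianFourier.integral_cexp_neg_mul_sq_norm_add (V := ℂ)
    (by simpa using Real.pi_pos : 0 < (π : ℂ).re) (2 * π * I) (conj z)
  rw [div_self hπ, one_cpow, one_mul, RCLike.norm_conj] at h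
  convert h using 3 with ξ
  · rw [Real.fourierChar_apply, ← Complex.exp_add]
    congr 1
    simp only [mul_re, ofReal_mul, ofReal_ofNat, ofReal_sub, neg_mul, Complex.inner,
      RingHomCompTriple.comp_apply, RingHom.id_apply]
    ring
  · field_simp
    rw [I_sq]
    ring

lemma fourierChar_re_sub_mul (a b z : ℂ) :
    (𝐞 ((a - b) * z).re : ℂ) = 𝐞 (a * z).re * conj (𝐞 (b * z).re : ℂ) := by
  rw [← Circle.coe_inv_eq_conj, ← AddChar.map_neg_eq_inv, ← Circle.coe_mul,
    ← AddChar.map_add_eq_mul, sub_mul, sub_re, sub_eq_add_neg]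

lemma integral_fourierChar_map_sub (ν : Measure ℂ) [SFinite ν] (z : ℂ) :
    ∫ y, (𝐞 (y * z).re : ℂ) ∂(ν.prod ν).map (fun p => p.1 - p.2) = charFn ν z := by
  rw [integral_map (by fun_prop) (by fun_prop)]
  simp_rw [fourierChar_re_sub_mul]
  rw [integral_prod_mul (fun a => (𝐞 (a * z).re : ℂ)) (fun b => conj (𝐞 (b * z).re : ℂ)),
    integral_conj, mul_conj', charFn_eq_norm_integral_fourierChar]
  push_cast
  rfl

instance isFiniteMeasure_diffLaw (ν : Measure ℂ) [IsFiniteMeasure ν] (μ : ℝ) : IsFiniteMeasure (diffLaw ν μ) :=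
  have := Measure.smul_finite ((ν.prod ν).map fun p => p.1 - p.2)
    (ENNReal.ofReal_ne_top (r := μ / 2))
  have := Measure.smul_finite (Measure.dirac (0 : ℂ)) (ENNReal.ofReal_ne_top (r := 1 - μ / 2))
  inferInstanceAs (IsFiniteMeasure (_ + _))

lemma integral_fourierChar_diffLaw (ν : Measure ℂ) [IsFiniteMeasure ν] {μ : ℝ}
    (h0 : 0 ≤ μ) (h2 : μ ≤ 2) (z : ℂ) :
    ∫ y, (𝐞 (y * z).re : ℂ) ∂diffLaw ν μ = 1 - μ / 2 + μ / 2 * charFn ν z := by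
  have hint : ∀ m : Measure ℂ, [IsFiniteMeasure m] → Integrable (fun y => (𝐞 (y * z).re : ℂ)) m :=
    fun m _ => (integrable_const 1).mono' (by fun_prop) (.of_forall fun y => (Circle.norm_coe _).le)
  rw [diffLaw, integral_add_measure ((hint _).smul_measure ENNReal.ofReal_ne_top)
    ((hint _).smul_measure ENNReal.ofReal_ne_top), integral_smul_measure,
    integral_smul_measure, integral_fourierChar_map_sub, integral_dirac,
    ENNReal.toReal_ofReal (by linarith), ENNReal.toReal_ofReal (by linarith)]
  simp only [real_smul, ofReal_div, ofReal_ofNat, zero_mul, zero_re, AddChar.map_zero_eq_one,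
    Circle.coe_one, ofReal_sub, ofReal_one, mul_one]
  ring

lemma fourierChar_re_mul_sum {ι : Type*} (s : Finset ι) (ξ : ℂ) (v x : ι → ℂ) :
    (𝐞 (ξ * ∑ i ∈ s, v i * x i).re : ℂ) = ∏ i ∈ s, (𝐞 (x i * (ξ * v i)).re : ℂ) := by
  have hsum : (ξ * ∑ i ∈ s, v i * x i).re = ∑ i ∈ s, (x i * (ξ * v i)).re := by
    rw [Finset.mul_sum, re_sum]
    congr 1 with i
    ring_nf
  simp only [hsum, Real.fourierChar_apply, ← Complex.exp_sum, ← Finset.sum_mul, ← ofReal_sum,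
    ← Finset.mul_sum]

lemma integral_gaussian_sum_pi_eq_integral_prod {ι : Type*} [Fintype ι] (m : Measure ℂ) [IsFiniteMeasure m]
    (v : ι → ℂ) :
    ∫ x, cexp (-π * ‖∑ i, v i * x i‖ ^ 2) ∂Measure.pi (fun _ => m) =
      ∫ ξ : ℂ, (∏ i, ∫ y, (𝐞 (y * (ξ * v i)).re : ℂ) ∂m) * cexp (-π * ‖ξ‖ ^ 2) := by
  have hgauss : Integrable (fun ξ : ℂ => cexp (-π * ‖ξ‖ ^ 2)) := by
    simpa using GaussianFourier.integrable_cexp_neg_mul_sq_norm_add (V := ℂ)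
      (by simpa using Real.pi_pos : 0 < (π : ℂ).re) 0 0
  have hint : Integrable (fun p : (ι → ℂ) × ℂ =>
      (𝐞 (p.2 * ∑ i, v i * p.1 i).re : ℂ) * cexp (-π * ‖p.2‖ ^ 2))
      ((Measure.pi fun _ => m).prod volume) :=
    (hgauss.comp_snd _).bdd_mul (by fun_prop) (.of_forall fun p => (Circle.norm_coe _).le)
  conv_lhs => enter [2, x]; rw [← integral_fourierChar_mul_gaussian]
  rw [integral_integral_swap hint]
  congr 1 with ξ
  rw [integral_mul_const]
  simp_rw [fourierChar_re_mul_sum]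
  exact congrArg (· * _)
    (integral_fintype_prod_eq_prod (𝕜 := ℂ) fun i y => (𝐞 (y * (ξ * v i)).re : ℂ))

theorem concProb_fourier_representation_general
    {Ω : Type*} [MeasureSpace Ω] [IsProbabilityMeasure (ℙ : Measure Ω)]
    (α : Ω → ℂ)
    (μ : ℝ) (hμ : 0 < μ) (hμ1 : μ ≤ 1)
    (n : ℕ) (v : Fin n → ℂ) :
    concProb (Measure.map α ℙ) μ v =
      ∫ ξ : ℂ, (∏ i, (1 - μ / 2 + μ / 2 * charFn (Measure.map α ℙ) (ξ * v i)))
        * Real.exp (-Real.pi * ‖ξ‖ ^ 2) := by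
  apply ofReal_injective
  rw [concProb, ← integral_complex_ofReal, ← integral_complex_ofReal]
  push_cast
  rw [integral_gaussian_sum_pi_eq_integral_prod]
  simp_rw [integral_fourierChar_diffLaw _ hμ.le (by linarith : μ ≤ 2)]

/-- **Fourier representation of the concentration probability** (Lemma 4.2). -/
theorem concProb_fourier_representation
    {Ω : Type*} [MeasureSpace Ω] [IsProbabilityMeasure (ℙ : Measure Ω)]
    (α : Ω → ℂ) (hmeas : Measurable α)
    (μ : ℝ) (hμ : 0 < μ) (hμ1 : μ ≤ 1)
    (n : ℕ) (v : Fin n → ℂ) :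
    concProb (Measure.map α ℙ) μ v =
      ∫ ξ : ℂ, (∏ i, (1 - μ / 2 + μ / 2 * charFn (Measure.map α ℙ) (ξ * v i)))
        * Real.exp (-Real.pi * ‖ξ‖ ^ 2) :=
  concProb_fourier_representation_general α μ hμ hμ1 n v
end

section
/- Let α be a complex random variable, let v = (v₁,…,vₙ) be a tuple of complex numbers, let r > 0 and 0 < μ ≤ 1, and let α·I_μ denote the product of α with an independent Bernoulli variable equal to 1 with probability μ and 0 otherwise. Then p_{r,αI_μ}(v) ≤ e^{πr²}·P_μ(v). -/
open MeasureTheory ProbabilityTheory Filter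

/-!
The indicator of `closedBall z r` is at most `e^{πr²} e^{-π|w - z|²}`, and `e^{-π|w|²}` is its
own Fourier transform. Hence `E e^{-π|W - z|²}` is the Gaussian average over `ξ` of
`e^{-2πi⟪z, ξ⟫}` times the characteristic function `∏ φ(v̄ᵢ ξ)` of the walk, where
`φ = μ φ_α + 1 - μ` is that of `α I_μ`.
Now `|μ φ_α + 1 - μ| ≤ μ/2 |φ_α|² + 1 - μ/2` (the difference is `μ/2 (|φ_α| - 1)² ≥ 0`), and the
right-hand side is the characteristic function of `α^{(μ)}`. So the integrand is dominated by the
same expression for `α^{(μ)}` with `z = 0`, which integrates back to `P_μ(v)`.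
-/

open Complex ComplexConjugate RealInnerProductSpace Metric BoundedContinuousFunction
open scoped ENNReal
open Real hiding exp

section Gaussian

variable {V : Type*} [NormedAddCommGroup V] [InnerProductSpace ℝ V] [FiniteDimensional ℝ V]
  [MeasurableSpace V] [BorelSpace V]

lemma integrable_cexp_neg_pi_mul_sq_norm : Integrable fun ξ : V ↦ cexp (-π * ‖ξ‖ ^ 2) := by
  simpa using GaussianFourier.integrable_cexp_neg_mul_sq_norm_add (V := V)
    (b := π) (by simp [pi_pos]) 0 0

lemma cexp_neg_pi_mul_sq_norm_eq_integral (w : V) :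
    cexp (-π * ‖w‖ ^ 2) = ∫ ξ : V, cexp (-π * ‖ξ‖ ^ 2) * cexp (⟪w, (2 * π) • ξ⟫ * I) := by
  have h := GaussianFourier.integral_cexp_neg_mul_sq_norm_add (V := V)
    (b := π) (by simp [pi_pos]) (2 * π * I) w
  have hπ : (π : ℂ) ≠ 0 := ofReal_ne_zero.mpr pi_ne_zero
  rw [div_self hπ, one_cpow, one_mul] at h
  convert h.symm using 2
  · field_simp
    rw [I_sq]
    ring
  · ext ξ
    rw [← Complex.exp_add, real_inner_smul_right]
    push_cast
    ring_nf

lemma integrable_cexp_neg_pi_mul_sq_norm_mul_charFun (ρ : Measure V) [IsFiniteMeasure ρ] (c : ℝ) :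
    Integrable fun ξ : V ↦ cexp (-π * ‖ξ‖ ^ 2) * charFun ρ (c • ξ) := by
  refine (integrable_cexp_neg_pi_mul_sq_norm.bdd_mul (f := fun ξ ↦ charFun ρ (c • ξ))
    (c := ρ.real Set.univ) ?_ ?_).congr ?_
  · exact (continuous_charFun.comp (continuous_const_smul c)).aestronglyMeasurable
  · exact .of_forall fun ξ ↦ norm_charFun_le _
  · exact .of_forall fun ξ ↦ mul_comm _ _

lemma integral_exp_neg_pi_mul_sq_norm_eq_integral_charFun (ρ : Measure V) [IsFiniteMeasure ρ] :
    ((∫ w, rexp (-π * ‖w‖ ^ 2) ∂ρ : ℝ) : ℂ)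
      = ∫ ξ, cexp (-π * ‖ξ‖ ^ 2) * charFun ρ ((2 * π) • ξ) := by
  have hint : Integrable (Function.uncurry fun (w ξ : V) ↦
      cexp (-π * ‖ξ‖ ^ 2) * cexp (⟪w, (2 * π) • ξ⟫ * I)) (ρ.prod volume) := by
    refine (integrable_cexp_neg_pi_mul_sq_norm.norm.comp_snd ρ).mono' (by fun_prop)
      (.of_forall fun p ↦ ?_)
    rw [Function.uncurry_def, norm_mul, norm_exp_ofReal_mul_I, mul_one]
  calc ((∫ w, rexp (-π * ‖w‖ ^ 2) ∂ρ : ℝ) : ℂ)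
      = ∫ w, ∫ ξ, cexp (-π * ‖ξ‖ ^ 2) * cexp (⟪w, (2 * π) • ξ⟫ * I) ∂volume ∂ρ := by
        rw [← integral_complex_ofReal]
        push_cast
        exact integral_congr_ae (.of_forall cexp_neg_pi_mul_sq_norm_eq_integral)
    _ = ∫ ξ, cexp (-π * ‖ξ‖ ^ 2) * charFun ρ ((2 * π) • ξ) := by
        simp_rw [integral_integral_swap hint, integral_const_mul, charFun_apply]

/-- The Gaussian weight has a positive Fourier transform, so domination of characteristic functions
passes to Gaussian integrals; translating `ρ` by `-z` only changes the phase of `charFun ρ`. -/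
lemma integral_exp_neg_pi_mul_sq_norm_sub_le_of_norm_charFun_le {ρ σ : Measure V}
    [IsFiniteMeasure ρ] [IsFiniteMeasure σ] (h : ∀ t, ‖charFun ρ t‖ ≤ (charFun σ t).re) (z : V) :
    ∫ w, rexp (-π * ‖w - z‖ ^ 2) ∂ρ ≤ ∫ w, rexp (-π * ‖w‖ ^ 2) ∂σ := by
  set ρz := ρ.map (· + -z)
  have hρz : ∫ w, rexp (-π * ‖w - z‖ ^ 2) ∂ρ = ∫ w, rexp (-π * ‖w‖ ^ 2) ∂ρz := by
    rw [integral_map (by fun_prop) (by fun_prop)]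
    simp_rw [sub_eq_add_neg]
  have hnorm (t : V) : ‖charFun ρz t‖ = ‖charFun ρ t‖ := by
    rw [charFun_map_add_const, norm_mul, norm_exp_ofReal_mul_I, mul_one]
  have hG (ξ : V) : cexp (-π * ‖ξ‖ ^ 2) = ((rexp (-π * ‖ξ‖ ^ 2) : ℝ) : ℂ) := by
    push_cast; rfl
  calc ∫ w, rexp (-π * ‖w - z‖ ^ 2) ∂ρ
      = (∫ ξ, cexp (-π * ‖ξ‖ ^ 2) * charFun ρz ((2 * π) • ξ)).re := by
        rw [hρz, ← integral_exp_neg_pi_mul_sq_norm_eq_integral_charFun, ofReal_re]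
    _ ≤ ∫ ξ, ‖cexp (-π * ‖ξ‖ ^ 2) * charFun ρz ((2 * π) • ξ)‖ :=
        (re_le_norm _).trans (norm_integral_le_integral_norm _)
    _ ≤ ∫ ξ, (cexp (-π * ‖ξ‖ ^ 2) * charFun σ ((2 * π) • ξ)).re := by
        refine integral_mono_of_nonneg (.of_forall fun _ ↦ norm_nonneg _)
          (integrable_cexp_neg_pi_mul_sq_norm_mul_charFun σ _).re (.of_forall fun ξ ↦ ?_)
        dsimp only
        rw [hG, re_ofReal_mul, norm_mul, norm_real, Real.norm_of_nonneg (Real.exp_pos _).le,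
          hnorm]
        exact mul_le_mul_of_nonneg_left (h _) (Real.exp_pos _).le
    _ = ∫ w, rexp (-π * ‖w‖ ^ 2) ∂σ := by
        refine (integral_re (integrable_cexp_neg_pi_mul_sq_norm_mul_charFun σ _)).trans ?_
        rw [← integral_exp_neg_pi_mul_sq_norm_eq_integral_charFun, RCLike.re_to_complex, ofReal_re]

end Gaussian

lemma measureReal_closedBall_le_exp_mul_integral {E : Type*} [NormedAddCommGroup E]
    [MeasurableSpace E] [OpensMeasurableSpace E] (ρ : Measure E) [IsFiniteMeasure ρ]
    (z : E) (r : ℝ) :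
    ρ.real (closedBall z r) ≤ rexp (π * r ^ 2) * ∫ w, rexp (-π * ‖w - z‖ ^ 2) ∂ρ := by
  have hint : Integrable (fun w ↦ rexp (-π * ‖w - z‖ ^ 2)) ρ :=
    .of_bound (by fun_prop : Continuous _).aestronglyMeasurable 1 (.of_forall fun w ↦ by
      rw [Real.norm_of_nonneg (Real.exp_pos _).le, Real.exp_le_one_iff]
      nlinarith [pi_pos, sq_nonneg ‖w - z‖])
  have hball : closedBall z r ⊆ {w | rexp (-π * r ^ 2) ≤ rexp (-π * ‖w - z‖ ^ 2)} := by
    intro w hw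
    rw [mem_closedBall, dist_eq_norm] at hw
    have := norm_nonneg (w - z)
    rw [Set.mem_ofPred_eq, Real.exp_le_exp]
    nlinarith [pi_pos, mul_le_mul hw hw this (this.trans hw)]
  calc ρ.real (closedBall z r)
      ≤ rexp (π * r ^ 2) * (rexp (-π * r ^ 2) * ρ.real (closedBall z r)) := by
        rw [← mul_assoc, ← Real.exp_add, neg_mul, add_neg_cancel, Real.exp_zero, one_mul]
    _ ≤ rexp (π * r ^ 2) * ∫ w, rexp (-π * ‖w - z‖ ^ 2) ∂ρ := by
        gcongr
        exact (mul_le_mul_of_nonneg_left (measureReal_mono hball) (Real.exp_pos _).le).trans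
          (mul_meas_ge_le_integral_of_nonneg (.of_forall fun _ ↦ (Real.exp_pos _).le) hint _)

section CharFunMeasure

variable {V : Type*} [NormedAddCommGroup V] [InnerProductSpace ℝ V] [MeasurableSpace V]
  [OpensMeasurableSpace V]

lemma charFun_add_measure (ρ σ : Measure V) [IsFiniteMeasure ρ] [IsFiniteMeasure σ] (t : V) :
    charFun (ρ + σ) t = charFun ρ t + charFun σ t := by
  simp_rw [charFun_eq_integral_innerProbChar]
  exact integral_add_measure ((innerProbChar t).integrable ρ) ((innerProbChar t).integrable σ)

omit [OpensMeasurableSpace V] in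
lemma charFun_smul_measure (c : ℝ≥0∞) (ρ : Measure V) (t : V) :
    charFun (c • ρ) t = c.toReal * charFun ρ t := by
  rw [charFun_apply, charFun_apply, integral_smul_measure, real_smul]

lemma charFun_ofReal_smul_add_ofReal_smul (ρ σ : Measure V) [IsFiniteMeasure ρ]
    [IsFiniteMeasure σ] {a b : ℝ} (ha : 0 ≤ a) (hb : 0 ≤ b) (t : V) :
    charFun (ENNReal.ofReal a • ρ + ENNReal.ofReal b • σ) t
      = a * charFun ρ t + b * charFun σ t := by
  have := ρ.smul_finite (ENNReal.ofReal_ne_top (r := a))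
  have := σ.smul_finite (ENNReal.ofReal_ne_top (r := b))
  rw [charFun_add_measure, charFun_smul_measure, charFun_smul_measure, ENNReal.toReal_ofReal ha,
    ENNReal.toReal_ofReal hb]

end CharFunMeasure

lemma charFun_map_sub_prod_self {V : Type*} [NormedAddCommGroup V] [InnerProductSpace ℝ V]
    [MeasurableSpace V] [BorelSpace V] [SecondCountableTopology V] (ν : Measure V)
    [SFinite ν] (t : V) :
    charFun ((ν.prod ν).map fun p ↦ p.1 - p.2) t = ‖charFun ν t‖ ^ 2 := by
  rw [charFun_apply, integral_map (by fun_prop) (by fun_prop)]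
  have (p : V × V) :
      cexp (⟪p.1 - p.2, t⟫ * I) = cexp (⟪p.1, t⟫ * I) * conj (cexp (⟪p.2, t⟫ * I)) := by
    rw [← exp_conj, ← Complex.exp_add, inner_sub_left]
    congr 1
    simp only [map_mul, conj_ofReal, conj_I, ofReal_sub]
    ring
  simp_rw [this]
  rw [integral_prod_mul (fun x ↦ cexp (⟪x, t⟫ * I)) (fun x ↦ conj (cexp (⟪x, t⟫ * I))),
    integral_conj, ← charFun_apply, mul_conj, normSq_eq_norm_sq]
  push_cast
  rfl

section Mixtures

variable (ν : Measure ℂ) [IsFiniteMeasure ν] {μ : ℝ}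

instance : IsFiniteMeasure (bernoulliMix ν μ) := by
  have := ν.smul_finite (ENNReal.ofReal_ne_top (r := μ))
  have := (Measure.dirac (0 : ℂ)).smul_finite (ENNReal.ofReal_ne_top (r := 1 - μ))
  unfold bernoulliMix
  infer_instance

instance : IsFiniteMeasure (diffLaw ν μ) := by
  have := (Measure.map (fun p : ℂ × ℂ ↦ p.1 - p.2) (ν.prod ν)).smul_finite
    (ENNReal.ofReal_ne_top (r := μ / 2))
  have := (Measure.dirac (0 : ℂ)).smul_finite (ENNReal.ofReal_ne_top (r := 1 - μ / 2))
  unfold diffLaw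
  infer_instance

lemma charFun_bernoulliMix (hμ0 : 0 ≤ μ) (hμ1 : μ ≤ 1) (t : ℂ) :
    charFun (bernoulliMix ν μ) t = μ * charFun ν t + (1 - μ : ℝ) := by
  rw [bernoulliMix, charFun_ofReal_smul_add_ofReal_smul _ _ hμ0 (sub_nonneg.2 hμ1), charFun_dirac]
  simp

lemma charFun_diffLaw (hμ0 : 0 ≤ μ) (hμ1 : μ ≤ 1) (t : ℂ) :
    charFun (diffLaw ν μ) t = (μ / 2 * ‖charFun ν t‖ ^ 2 + (1 - μ / 2) : ℝ) := by
  rw [diffLaw, charFun_ofReal_smul_add_ofReal_smul _ _ (by linarith) (by linarith),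
    charFun_map_sub_prod_self, charFun_dirac]
  simp

lemma norm_charFun_bernoulliMix_le (hμ0 : 0 ≤ μ) (hμ1 : μ ≤ 1) (t : ℂ) :
    ‖charFun (bernoulliMix ν μ) t‖ ≤ μ / 2 * ‖charFun ν t‖ ^ 2 + (1 - μ / 2) := by
  rw [charFun_bernoulliMix ν hμ0 hμ1]
  calc ‖(μ : ℂ) * charFun ν t + (1 - μ : ℝ)‖
      ≤ μ * ‖charFun ν t‖ + (1 - μ) := by
        refine (norm_add_le _ _).trans_eq ?_
        rw [norm_mul, norm_real, norm_real, Real.norm_of_nonneg hμ0,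
          Real.norm_of_nonneg (sub_nonneg.2 hμ1)]
    _ ≤ μ / 2 * ‖charFun ν t‖ ^ 2 + (1 - μ / 2) := by
        nlinarith [mul_nonneg hμ0 (sq_nonneg (‖charFun ν t‖ - 1))]

end Mixtures

/-- The law of the random walk `W_α(v)` when `α` has law `ν`. -/
noncomputable def walkLaw {ι : Type*} [Fintype ι] (ν : Measure ℂ) (v : ι → ℂ) : Measure ℂ :=
  (Measure.pi fun _ : ι => ν).map fun x ↦ ∑ i, v i * x i

section Walk

variable {ι : Type*} [Fintype ι] (ν : Measure ℂ) (v : ι → ℂ)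

instance [IsFiniteMeasure ν] : IsFiniteMeasure (walkLaw ν v) := by
  unfold walkLaw
  infer_instance

lemma measurable_walk : Measurable fun x : ι → ℂ ↦ ∑ i, v i * x i :=
  Finset.measurable_sum _ fun i _ ↦ by fun_prop

lemma smallBall_eq_iSup_walkLaw (r : ℝ) :
    smallBall ν v r = ⨆ z, (walkLaw ν v).real (closedBall z r) := by
  simp_rw [walkLaw, measureReal_def, Measure.map_apply (measurable_walk v) measurableSet_closedBall]
  rfl

lemma concProb_eq_integral_walkLaw (μ : ℝ) :
    concProb ν μ v = ∫ w, rexp (-π * ‖w‖ ^ 2) ∂(walkLaw (diffLaw ν μ) v) := by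
  rw [walkLaw, integral_map (measurable_walk v).aemeasurable (by fun_prop)]
  rfl

lemma charFun_walkLaw [SigmaFinite ν] (t : ℂ) :
    charFun (walkLaw ν v) t = ∏ i, charFun ν (conj (v i) * t) := by
  rw [charFun_apply, walkLaw, integral_map (measurable_walk v).aemeasurable (by fun_prop)]
  simp_rw [charFun_apply, ← integral_fintype_prod_eq_prod, ← Complex.exp_sum]
  congr with x
  simp_rw [sum_inner, Complex.inner, ofReal_sum, Finset.sum_mul]
  congr with i
  rw [map_mul]
  ring_nf

lemma norm_charFun_walkLaw_bernoulliMix_le [IsFiniteMeasure ν] {μ : ℝ} (hμ0 : 0 ≤ μ)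
    (hμ1 : μ ≤ 1) (t : ℂ) :
    ‖charFun (walkLaw (bernoulliMix ν μ) v) t‖ ≤ (charFun (walkLaw (diffLaw ν μ) v) t).re := by
  simp_rw [charFun_walkLaw, charFun_diffLaw ν hμ0 hμ1, ← ofReal_prod, ofReal_re, norm_prod]
  exact Finset.prod_le_prod (fun _ _ ↦ norm_nonneg _)
    fun _ _ ↦ norm_charFun_bernoulliMix_le ν hμ0 hμ1 _

end Walk

theorem smallBall_le_concProb_sparse_general
    {Ω : Type*} [MeasureSpace Ω] [IsProbabilityMeasure (ℙ : Measure Ω)]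
    (α : Ω → ℂ)
    (n : ℕ) (v : Fin n → ℂ) (r : ℝ)
    (μ : ℝ) (hμ : 0 < μ) (hμ1 : μ ≤ 1) :
    smallBall (bernoulliMix (Measure.map α ℙ) μ) v r
      ≤ Real.exp (Real.pi * r ^ 2) * concProb (Measure.map α ℙ) μ v := by
  rw [smallBall_eq_iSup_walkLaw, concProb_eq_integral_walkLaw]
  refine ciSup_le fun z ↦ (measureReal_closedBall_le_exp_mul_integral _ z r).trans ?_
  gcongr
  exact integral_exp_neg_pi_mul_sq_norm_sub_le_of_norm_charFun_le
    (norm_charFun_walkLaw_bernoulliMix_le _ v hμ.le hμ1) z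

/-- **Concentration probability bounds small ball probability, sparse version**
(Lemma 4.4). -/
theorem smallBall_le_concProb_sparse
    {Ω : Type*} [MeasureSpace Ω] [IsProbabilityMeasure (ℙ : Measure Ω)]
    (α : Ω → ℂ) (hmeas : Measurable α)
    (n : ℕ) (v : Fin n → ℂ) (r : ℝ) (hr : 0 < r)
    (μ : ℝ) (hμ : 0 < μ) (hμ1 : μ ≤ 1) :
    smallBall (bernoulliMix (Measure.map α ℙ) μ) v r
      ≤ Real.exp (Real.pi * r ^ 2) * concProb (Measure.map α ℙ) μ v :=
  smallBall_le_concProb_sparse_general α n v r μ hμ hμ1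
end

section
/- There is an absolute constant c > 0 such that for every complex random variable α, every w ∈ ℂ, and every 0 < μ ≤ 1, one has (1 − μ/2) + (μ/2)·f(w) ≤ exp(−c·μ·‖w‖_α²); in particular f(w) ≤ 1 − c·‖w‖_α². -/
open MeasureTheory ProbabilityTheory Filter

/-!
Expanding the square, `f(w) = E cos (2π Re (w (α₁ - α₂)))`, and `cos (2π t) ≤ 1 - 8 ‖t‖²_{ℝ/ℤ}`
(the quadratic upper bound for `cos` on `[-π, π]`, after reducing `t` mod `1`), so
`f(w) ≤ 1 - 8 ‖w‖_α²`. The mixture `(1 - μ/2) + (μ/2) f(w)` is then at most `1 - 4 μ ‖w‖_α²`,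
which is at most `exp (-4 μ ‖w‖_α²)` since `1 + x ≤ eˣ`.
-/

open Real

lemma measurable_intCast_round : Measurable fun x : ℝ => ((round x : ℤ) : ℝ) := by
  simp_rw [round_eq]
  exact measurable_from_top.comp (measurable_id.add_const _).floor

lemma cos_two_pi_mul_le_one_sub_mul_sq_abs_sub_round (s : ℝ) :
    cos (2 * π * s) ≤ 1 - 8 * |s - round s| ^ 2 := by
  have hs : 2 * π * s = 2 * π * (s - round s) + round s * (2 * π) := by ring
  have hbound : |2 * π * (s - round s)| ≤ π := by
    rw [abs_mul, abs_of_pos two_pi_pos]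
    nlinarith [abs_sub_round s, pi_pos]
  calc cos (2 * π * s) = cos (2 * π * (s - round s)) := by
        rw [hs, cos_add_int_mul_two_pi]
    _ ≤ 1 - 2 / π ^ 2 * (2 * π * (s - round s)) ^ 2 := cos_le_one_sub_mul_cos_sq hbound
    _ = 1 - 8 * |s - round s| ^ 2 := by
        rw [sq_abs]; field_simp; ring

lemma sq_norm_integral_exp_mul_I {X : Type*} [MeasurableSpace X] (ν : Measure X)
    [IsFiniteMeasure ν] {g : X → ℝ} (hg : Measurable g) :
    ‖∫ x, Complex.exp (g x * Complex.I) ∂ν‖ ^ 2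
      = ∫ p, cos (g p.1 - g p.2) ∂(ν.prod ν) := by
  have hint : Integrable (fun p : X × X => Complex.exp (↑(g p.1 - g p.2) * Complex.I))
      (ν.prod ν) :=
    .of_bound (by fun_prop) 1 (.of_forall fun _ => (Complex.norm_exp_ofReal_mul_I _).le)
  have hprod : (∫ x, Complex.exp (g x * Complex.I) ∂ν) *
      starRingEnd ℂ (∫ x, Complex.exp (g x * Complex.I) ∂ν)
      = ∫ p, Complex.exp (↑(g p.1 - g p.2) * Complex.I) ∂(ν.prod ν) := by
    rw [← integral_conj, ← integral_prod_mul]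
    congr 1 with p
    rw [← Complex.exp_conj, ← Complex.exp_add]
    simp only [map_mul, Complex.conj_ofReal, Complex.conj_I, Complex.ofReal_sub]
    ring_nf
  calc ‖∫ x, Complex.exp (g x * Complex.I) ∂ν‖ ^ 2
      = ((∫ x, Complex.exp (g x * Complex.I) ∂ν) *
          starRingEnd ℂ (∫ x, Complex.exp (g x * Complex.I) ∂ν)).re := by
        rw [Complex.mul_conj, Complex.ofReal_re, Complex.normSq_eq_norm_sq]
    _ = ∫ p, cos (g p.1 - g p.2) ∂(ν.prod ν) := by
        rw [hprod, ← RCLike.re_to_complex, ← integral_re hint]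
        simp only [RCLike.re_to_complex, Complex.exp_ofReal_mul_I_re]

lemma charFn_eq_integral_cos (ν : Measure ℂ) [IsFiniteMeasure ν] (w : ℂ) :
    charFn ν w = ∫ p, cos (2 * π * (w * (p.1 - p.2)).re) ∂(ν.prod ν) := by
  have hg : Measurable fun x : ℂ => 2 * π * (x * w).re := by fun_prop
  rw [charFn]
  convert sq_norm_integral_exp_mul_I ν hg using 2
  · congr 2 with x
    congr 1
    push_cast
    ring
  · congr 1 with p
    congr 1
    simp only [Complex.mul_re, Complex.sub_re, Complex.sub_im]
    ring

lemma alphaNorm_sq (ν : Measure ℂ) (w : ℂ) :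
    alphaNorm ν w ^ 2 = ∫ p : ℂ × ℂ,
      |(w * (p.1 - p.2)).re - (round ((w * (p.1 - p.2)).re) : ℝ)| ^ 2 ∂(ν.prod ν) :=
  sq_sqrt (integral_nonneg fun _ => by positivity)

lemma Measurable.integrable_sq_abs_sub_round {X : Type*} [MeasurableSpace X] {ν : Measure X}
    [IsFiniteMeasure ν] {f : X → ℝ} (hf : Measurable f) :
    Integrable (fun x => |f x - round (f x)| ^ 2) ν := by
  refine .of_bound ?_ ((1 / 2) ^ 2) (.of_forall fun x => ?_)
  · exact ((hf.sub (measurable_intCast_round.comp hf)).abs.pow_const 2).aestronglyMeasurable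
  · rw [norm_pow, Real.norm_eq_abs, abs_abs]
    exact pow_le_pow_left₀ (abs_nonneg _) (abs_sub_round (f x)) 2

lemma charFn_le_one_sub_mul_alphaNorm_sq (ν : Measure ℂ) [IsProbabilityMeasure ν] (w : ℂ) :
    charFn ν w ≤ 1 - 8 * alphaNorm ν w ^ 2 := by
  have hf : Measurable fun p : ℂ × ℂ => (w * (p.1 - p.2)).re := by fun_prop
  have hdist := hf.integrable_sq_abs_sub_round (ν := ν.prod ν)
  have hcos : Integrable (fun p : ℂ × ℂ => cos (2 * π * (w * (p.1 - p.2)).re)) (ν.prod ν) :=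
    .of_bound (by fun_prop) 1 (.of_forall fun _ => (Real.norm_eq_abs _ ▸ abs_cos_le_one _))
  rw [charFn_eq_integral_cos, alphaNorm_sq]
  calc ∫ p, cos (2 * π * (w * (p.1 - p.2)).re) ∂(ν.prod ν)
      ≤ ∫ p, (1 - 8 * |(w * (p.1 - p.2)).re - round (w * (p.1 - p.2)).re| ^ 2) ∂(ν.prod ν) :=
        integral_mono hcos ((integrable_const _).sub (hdist.const_mul 8))
          fun _ => cos_two_pi_mul_le_one_sub_mul_sq_abs_sub_round _
    _ = _ := by
        rw [integral_sub (integrable_const _) (hdist.const_mul 8), integral_const,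
          integral_const_mul, probReal_univ, one_smul]

/-- **Relationship between the characteristic function `f` and the `α`-norm**
(Lemma 5.2). -/
theorem charFn_le_exp_alphaNorm :
    ∃ c : ℝ, 0 < c ∧
      ∀ (Ω : Type) [MeasureSpace Ω], IsProbabilityMeasure (ℙ : Measure Ω) →
      ∀ α : Ω → ℂ, Measurable α →
      ∀ w : ℂ, ∀ μ : ℝ, 0 < μ → μ ≤ 1 →
        (1 - μ / 2) + μ / 2 * charFn (Measure.map α ℙ) w
            ≤ Real.exp (-(c * μ * alphaNorm (Measure.map α ℙ) w ^ 2)) ∧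
        charFn (Measure.map α ℙ) w ≤ 1 - c * alphaNorm (Measure.map α ℙ) w ^ 2 := by
  refine ⟨4, four_pos, ?_⟩
  intro Ω _ _ α hα w μ hμ0 _
  have := Measure.isProbabilityMeasure_map (μ := ℙ) hα.aemeasurable
  have hf := charFn_le_one_sub_mul_alphaNorm_sq (Measure.map α ℙ) w
  have hA := sq_nonneg (alphaNorm (Measure.map α ℙ) w)
  refine ⟨?_, by linarith⟩
  calc (1 - μ / 2) + μ / 2 * charFn (Measure.map α ℙ) w
      ≤ -(4 * μ * alphaNorm (Measure.map α ℙ) w ^ 2) + 1 := by nlinarith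
    _ ≤ exp (-(4 * μ * alphaNorm (Measure.map α ℙ) w ^ 2)) := add_one_le_exp _
end
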